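/- arXiv:2208.06832 — 5 statements merged into one kernel-verified Lean document; each statement's English description precedes it below -/
import Mathlib

section
/- A cyclic code of odd length n over ℤ/4, viewed as an ideal I = ⟨f(x)h(x), 2f(x)g(x)⟩ of (ℤ/4)[x]/(xⁿ-1) where xⁿ-1 = f(x)g(x)h(x) is a factorization into monic polynomials, satisfies |I| = 4^{deg g}·2^{deg h}. -/
/-!
Modulo 2, `g` and `h` are coprime because `X ^ n - 1` is separable over `𝔽₂` for odd
`n`; coprimality lifts from `𝔽₂[X]` to `(ℤ/4)[X]` since the kernel of reduction is nilpotent.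
Then, modulo `f * g * h`, an element `f * h * a + f * g * w` with `deg a < deg g` and
`deg w < deg h` vanishes only for `a = w = 0`. Reducing multipliers modulo `g` and `h` writes every
element of the ideal in this form with `w` even, and uniquely so: there are `4 ^ deg g` choices for
`a` and `2 ^ deg h` for `w`.
-/

open Polynomial

theorem IsCoprime.of_map {R S : Type*} [CommRing R] [CommRing S] {φ : R →+* S}
    (hφ : Function.Surjective φ) (hker : RingHom.ker φ ≤ nilradical R) {a b : R}
    (hab : IsCoprime (φ a) (φ b)) : IsCoprime a b := by
  obtain ⟨u, v, huv⟩ := hab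
  obtain ⟨u, rfl⟩ := hφ u
  obtain ⟨v, rfl⟩ := hφ v
  have hnil : IsNilpotent (u * a + v * b - 1) :=
    hker (by simp only [RingHom.mem_ker, map_sub, map_add, map_mul, huv, map_one, sub_self])
  obtain ⟨w, hw⟩ := (sub_add_cancel (u * a + v * b) 1 ▸ hnil.isUnit_add_one).exists_left_inv
  exact ⟨w * u, w * v, by linear_combination hw⟩

theorem ZMod.ker_castHom_four_two_le_nilradical :
    RingHom.ker (ZMod.castHom (by norm_num : 2 ∣ 4) (ZMod 2)) ≤ nilradical (ZMod 4) := by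
  intro x hx
  rw [RingHom.mem_ker] at hx
  exact mem_nilradical.2 ⟨2, by revert x; decide⟩

namespace Polynomial

theorem ker_mapRingHom_le_nilradical {R S : Type*} [CommRing R] [CommRing S] {φ : R →+* S}
    (hker : RingHom.ker φ ≤ nilradical R) : RingHom.ker (mapRingHom φ) ≤ nilradical R[X] := by
  intro p hp
  refine mem_nilradical.2 (Polynomial.isNilpotent_iff.2 fun i => mem_nilradical.1 (hker ?_))
  rw [RingHom.mem_ker] at hp ⊢
  simpa using congrArg (coeff · i) hp

theorem isCoprime_of_mul_mul_eq_X_pow_sub_one {R : Type*} [CommRing R] {n : ℕ}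
    (hn : IsUnit (n : R)) {f g h : R[X]} (hfac : f * g * h = X ^ n - 1) : IsCoprime g h := by
  have hsep : (X ^ n - 1 : R[X]).Separable := by
    simpa using separable_X_pow_sub_C_unit 1 hn
  exact (hsep.of_dvd ⟨f, by rw [← hfac]; ring⟩).isCoprime

section CommRing

variable {R : Type*} [CommRing R]

theorem Monic.modByMonic_mem_degreeLT {q : R[X]} (hq : q.Monic) (p : R[X]) :
    p %ₘ q ∈ degreeLT R q.natDegree := by
  nontriviality R
  rw [mem_degreeLT, ← degree_eq_natDegree hq.ne_zero]
  exact degree_modByMonic_lt p hq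

theorem Monic.eq_zero_of_dvd_of_mem_degreeLT {g a : R[X]} (hg : g.Monic) (hga : g ∣ a)
    (ha : a ∈ degreeLT R g.natDegree) : a = 0 := by
  nontriviality R
  by_contra ha0
  refine hg.not_dvd_of_degree_lt ha0 ?_ hga
  rw [degree_eq_natDegree hg.ne_zero]
  exact mem_degreeLT.1 ha

theorem mk_mul_add_mul_eq_modByMonic (f g h U V : R[X]) :
    Ideal.Quotient.mk (Ideal.span {f * g * h}) (f * h * U + f * g * V) =
      Ideal.Quotient.mk (Ideal.span {f * g * h}) (f * h * (U %ₘ g) + f * g * (V %ₘ h)) := by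
  rw [Ideal.Quotient.eq, Ideal.mem_span_singleton']
  refine ⟨U /ₘ g + V /ₘ h, ?_⟩
  linear_combination (f * h) * modByMonic_add_div U g + (f * g) * modByMonic_add_div V h

theorem eq_zero_of_mul_add_mul_mem_span {f g h a w : R[X]} (hf : f.Monic) (hg : g.Monic)
    (hh : h.Monic) (hgh : IsCoprime g h) (ha : a ∈ degreeLT R g.natDegree)
    (hw : w ∈ degreeLT R h.natDegree) (hmem : f * h * a + f * g * w ∈ Ideal.span {f * g * h}) :
    a = 0 ∧ w = 0 := by
  obtain ⟨c, hc⟩ := Ideal.mem_span_singleton'.1 hmem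
  have hcancel : h * a + g * w = g * h * c := hf.isRegular.left (by linear_combination -hc)
  have hga : g ∣ h * a := ⟨h * c - w, by linear_combination hcancel⟩
  have hhw : h ∣ g * w := ⟨g * c - a, by linear_combination hcancel⟩
  exact ⟨hg.eq_zero_of_dvd_of_mem_degreeLT (hgh.dvd_of_dvd_mul_left hga) ha,
    hh.eq_zero_of_dvd_of_mem_degreeLT (hgh.symm.dvd_of_dvd_mul_left hhw) hw⟩

theorem injective_mk_mul_add_mul {f g h : R[X]} (hf : f.Monic) (hg : g.Monic) (hh : h.Monic)
    (hgh : IsCoprime g h) :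
    Function.Injective fun p : degreeLT R g.natDegree × degreeLT R h.natDegree =>
      Ideal.Quotient.mk (Ideal.span {f * g * h}) (f * h * p.1 + f * g * p.2) := by
  intro p q hpq
  rw [Ideal.Quotient.eq] at hpq
  obtain ⟨h₁, h₂⟩ := eq_zero_of_mul_add_mul_mem_span hf hg hh hgh (sub_mem p.1.2 q.1.2)
    (sub_mem p.2.2 q.2.2) (by convert hpq using 1; ring)
  exact Prod.ext (Subtype.ext (sub_eq_zero.1 h₁)) (Subtype.ext (sub_eq_zero.1 h₂))

end CommRing

/-- `∑ 2 ṽᵢ Xⁱ` for any lift `ṽᵢ ∈ ℤ/4` of `vᵢ ∈ 𝔽₂`: this parametrizes the polynomials of degree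
`< d` with even coefficients. -/
noncomputable def twiceLift (d : ℕ) (v : Fin d → ZMod 2) : degreeLT (ZMod 4) d :=
  (degreeLTEquiv (ZMod 4) d).symm fun i => 2 * ((v i).val : ZMod 4)

theorem twiceLift_injective (d : ℕ) : Function.Injective (twiceLift d) :=
  (degreeLTEquiv (ZMod 4) d).symm.injective.comp <|
    Function.Injective.comp_left (g := fun z : ZMod 2 => 2 * (z.val : ZMod 4)) (by decide)

theorem coe_twiceLift (d : ℕ) (v : Fin d → ZMod 2) :
    (twiceLift d v : (ZMod 4)[X]) =
      2 * (degreeLTEquiv (ZMod 4) d).symm fun i => ((v i).val : ZMod 4) := by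
  rw [← C_ofNat, ← smul_eq_C_mul, ← Submodule.coe_smul, ← map_smul]
  rfl

theorem exists_twiceLift_eq {d : ℕ} (p : degreeLT (ZMod 4) d) :
    ∃ v, twiceLift d v = (2 : ZMod 4) • p := by
  refine ⟨fun i => ((degreeLTEquiv (ZMod 4) d p i).val : ZMod 2), ?_⟩
  rw [twiceLift, ← LinearEquiv.symm_apply_apply (degreeLTEquiv (ZMod 4) d) ((2 : ZMod 4) • p),
    map_smul]
  congr 1
  funext i
  exact (by decide : ∀ x : ZMod 4, 2 * (((x.val : ZMod 2)).val : ZMod 4) = 2 * x) _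

theorem isCoprime_of_mul_mul_eq_X_pow_sub_one_of_odd {n : ℕ} (hn : Odd n) {f g h : (ZMod 4)[X]}
    (hfac : f * g * h = X ^ n - 1) : IsCoprime g h := by
  set φ := ZMod.castHom (by norm_num : 2 ∣ 4) (ZMod 2)
  refine IsCoprime.of_map (φ := mapRingHom φ) (map_surjective _ (ZMod.castHom_surjective _))
    (ker_mapRingHom_le_nilradical ZMod.ker_castHom_four_two_le_nilradical) ?_
  refine isCoprime_of_mul_mul_eq_X_pow_sub_one (f := f.map φ) (n := n)
    (by simp [hn.natCast_zmod_two]) ?_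
  simp [← Polynomial.map_mul, hfac]

theorem card_span_mk_mul_two_mul {f g h : (ZMod 4)[X]} (hf : f.Monic) (hg : g.Monic)
    (hh : h.Monic) (hgh : IsCoprime g h) :
    Nat.card (Ideal.span {Ideal.Quotient.mk (Ideal.span {f * g * h}) (f * h),
      Ideal.Quotient.mk (Ideal.span {f * g * h}) (2 * f * g)}) =
      4 ^ g.natDegree * 2 ^ h.natDegree := by
  set e := degreeLTEquiv (ZMod 4) g.natDegree
  set mk := Ideal.Quotient.mk (Ideal.span {f * g * h})
  let Φ (uv : (Fin g.natDegree → ZMod 4) × (Fin h.natDegree → ZMod 2)) :=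
    mk (f * h * e.symm uv.1 + f * g * twiceLift _ uv.2)
  have hinj : Function.Injective Φ := fun p q hpq =>
    e.symm.injective.prodMap (twiceLift_injective _) (injective_mk_mul_add_mul hf hg hh hgh hpq)
  have hrange : Set.range Φ = Ideal.span {mk (f * h), mk (2 * f * g)} := by
    ext x
    rw [SetLike.mem_coe, Ideal.mem_span_pair]
    constructor
    · rintro ⟨⟨u, v⟩, rfl⟩
      refine ⟨mk (e.symm u), mk ((degreeLTEquiv (ZMod 4) _).symm fun i => ((v i).val : ZMod 4)),
        ?_⟩
      simp only [Φ, coe_twiceLift, ← map_mul, ← map_add]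
      ring_nf
    · rintro ⟨U, V, rfl⟩
      obtain ⟨U, rfl⟩ := Ideal.Quotient.mk_surjective U
      obtain ⟨V, rfl⟩ := Ideal.Quotient.mk_surjective V
      obtain ⟨v, hv⟩ := exists_twiceLift_eq ⟨V %ₘ h, hh.modByMonic_mem_degreeLT V⟩
      refine ⟨(e ⟨U %ₘ g, hg.modByMonic_mem_degreeLT U⟩, v), ?_⟩
      simp only [Φ, LinearEquiv.symm_apply_apply, hv, ← map_mul, ← map_add, mk, SetLike.val_smul,
        ← smul_modByMonic, ← mk_mul_add_mul_eq_modByMonic]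
      congr 1
      rw [smul_eq_C_mul, C_ofNat]
      ring
  calc Nat.card (Ideal.span {mk (f * h), mk (2 * f * g)})
      = Nat.card (Set.range Φ) := by rw [hrange]; rfl
    _ = 4 ^ g.natDegree * 2 ^ h.natDegree := by
      rw [Nat.card_range_of_injective hinj]
      simp [Nat.card_eq_fintype_card]

end Polynomial

theorem cyclic_code_card_general (n : ℕ) (hn : Odd n)
    (f g h : Polynomial (ZMod 4)) (hf : f.Monic) (hg : g.Monic) (hh : h.Monic)
    (hfac : f * g * h = X ^ n - 1) :
    Nat.card
      (Ideal.span
        {Ideal.Quotient.mk (Ideal.span {(X ^ n - 1 : Polynomial (ZMod 4))}) (f * h),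
         Ideal.Quotient.mk (Ideal.span {(X ^ n - 1 : Polynomial (ZMod 4))}) (2 * f * g)} :
        Ideal (Polynomial (ZMod 4) ⧸ Ideal.span {(X ^ n - 1 : Polynomial (ZMod 4))})) =
      4 ^ g.natDegree * 2 ^ h.natDegree := by
  rw [← hfac]
  exact card_span_mk_mul_two_mul hf hg hh (isCoprime_of_mul_mul_eq_X_pow_sub_one_of_odd hn hfac)

theorem cyclic_code_card (n : ℕ) (hn : Odd n) (hpos : 0 < n)
    (f g h : Polynomial (ZMod 4)) (hf : f.Monic) (hg : g.Monic) (hh : h.Monic)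
    (hfac : f * g * h = X ^ n - 1) :
    Nat.card
      (Ideal.span
        {Ideal.Quotient.mk (Ideal.span {(X ^ n - 1 : Polynomial (ZMod 4))}) (f * h),
         Ideal.Quotient.mk (Ideal.span {(X ^ n - 1 : Polynomial (ZMod 4))}) (2 * f * g)} :
        Ideal (Polynomial (ZMod 4) ⧸ Ideal.span {(X ^ n - 1 : Polynomial (ZMod 4))})) =
      4 ^ g.natDegree * 2 ^ h.natDegree :=
  cyclic_code_card_general n hn f g h hf hg hh hfac
end

section
/- Let n be odd and let xⁿ-1 = f(x)g(x)h(x) be a monic factorization in (ℤ/4)[x]. Then the ideal ⟨f(x)h(x), 2f(x)g(x)⟩ of (ℤ/4)[x]/(xⁿ-1) is principal, generated by f(x)h(x) + 2f(x). -/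
open Polynomial

theorem cyclic_code_principal (n : ℕ) (hn : Odd n) (hpos : 0 < n)
    (f g h : Polynomial (ZMod 4)) (hf : f.Monic) (hg : g.Monic) (hh : h.Monic)
    (hfac : f * g * h = X ^ n - 1) :
    Ideal.span
      {Ideal.Quotient.mk (Ideal.span {(X ^ n - 1 : Polynomial (ZMod 4))}) (f * h),
       Ideal.Quotient.mk (Ideal.span {(X ^ n - 1 : Polynomial (ZMod 4))}) (2 * f * g)} =
    Ideal.span
      {Ideal.Quotient.mk (Ideal.span {(X ^ n - 1 : Polynomial (ZMod 4))}) (f * h + 2 * f)} := by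
  set I : Ideal (Polynomial (ZMod 4)) := Ideal.span {(X ^ n - 1 : Polynomial (ZMod 4))} with hI
  set π := Ideal.Quotient.mk I with hπ
  have h4 : (4 : Polynomial (ZMod 4)) = 0 := by
    have := CharP.cast_eq_zero (Polynomial (ZMod 4)) 4
    exact_mod_cast this
  -- coprimality of g and h modulo 2
  set φ : ZMod 4 →+* ZMod 2 := ZMod.castHom (show (2:ℕ) ∣ 4 by norm_num) (ZMod 2) with hφ
  obtain ⟨a, b, c, habc⟩ : ∃ a b c : Polynomial (ZMod 4), a * g + b * h = 1 + 2 * c := by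
    have hsep : (X ^ n - 1 : Polynomial (ZMod 2)).Separable := by
      rw [Polynomial.X_pow_sub_one_separable_iff]
      intro hzero
      rw [ZMod.natCast_eq_zero_iff] at hzero
      exact (Nat.not_even_iff_odd.mpr hn) (even_iff_two_dvd.mpr hzero)
    have hmapfac : (f.map φ) * (g.map φ) * (h.map φ) = (X ^ n - 1 : Polynomial (ZMod 2)) := by
      rw [← Polynomial.map_mul, ← Polynomial.map_mul, hfac]
      simp [Polynomial.map_sub, Polynomial.map_pow]
    have hdvd : (g.map φ) * (h.map φ) ∣ (X ^ n - 1 : Polynomial (ZMod 2)) :=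
      ⟨f.map φ, by rw [← hmapfac]; ring⟩
    have hcop : IsCoprime (g.map φ) (h.map φ) :=
      Polynomial.Separable.isCoprime (hsep.of_dvd hdvd)
    obtain ⟨u, v, huv⟩ := hcop
    have hsurj : Function.Surjective (Polynomial.map φ : Polynomial (ZMod 4) → Polynomial (ZMod 2)) :=
      Polynomial.map_surjective φ (ZMod.ringHom_surjective φ)
    obtain ⟨a, ha⟩ := hsurj u
    obtain ⟨b, hb⟩ := hsurj v
    have hker : (a * g + b * h - 1).map φ = 0 := by
      rw [Polynomial.map_sub, Polynomial.map_add, Polynomial.map_mul, Polynomial.map_mul,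
        Polynomial.map_one, ha, hb, huv, sub_self]
    have key : ∀ z : ZMod 4, ZMod.castHom (show (2:ℕ) ∣ 4 by norm_num) (ZMod 2) z = 0 →
        ∃ w : ZMod 4, z = 2 * w := by decide
    have hdvd2 : (2 : Polynomial (ZMod 4)) ∣ (a * g + b * h - 1) := by
      have hC : (2 : Polynomial (ZMod 4)) = C (2 : ZMod 4) := by
        rw [show (2 : ZMod 4) = ((2:ℕ) : ZMod 4) by norm_num, Polynomial.C_eq_natCast]
        norm_num
      rw [hC, Polynomial.C_dvd_iff_dvd_coeff]
      intro i
      have hcoeff : φ ((a * g + b * h - 1).coeff i) = 0 := by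
        rw [← Polynomial.coeff_map, hker, Polynomial.coeff_zero]
      obtain ⟨w, hw⟩ := key _ hcoeff
      exact ⟨w, hw⟩
    obtain ⟨c, hc⟩ := hdvd2
    exact ⟨a, b, c, by linear_combination hc⟩
  -- quotient facts
  have h2f : (2 : Polynomial (ZMod 4)) * f = a * (2 * f * g) + b * (2 * f * h) := by
    linear_combination (-2 * f) * habc - f * c * h4
  have hB : π (2 * f * g) = π g * π (f * h + 2 * f) := by
    rw [← map_mul, Ideal.Quotient.eq]
    have e : 2 * f * g - g * (f * h + 2 * f) = -(X ^ n - 1) := by linear_combination -hfac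
    rw [e]
    exact neg_mem (Ideal.subset_span rfl)
  have h2fhQ : π (2 * f * h) = 2 * π (f * h + 2 * f) := by
    have e : (2 : Polynomial (ZMod 4)) * (f * h + 2 * f) = 2 * f * h := by
      linear_combination f * h4
    rw [← e, map_mul, map_ofNat]
  have h2fQ : π (2 * f) = (π a * π g + 2 * π b) * π (f * h + 2 * f) := by
    have e1 : π (2 * f) = π a * π (2 * f * g) + π b * π (2 * f * h) := by
      rw [← map_mul, ← map_mul, ← map_add, ← h2f]
    rw [e1, hB, h2fhQ]; ring
  apply le_antisymm
  · rw [Ideal.span_le]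
    rintro x hx
    simp only [Set.mem_insert_iff, Set.mem_singleton_iff] at hx
    rcases hx with rfl | rfl
    · rw [SetLike.mem_coe, Ideal.mem_span_singleton']
      refine ⟨1 - (π a * π g + 2 * π b), ?_⟩
      have e2 : π (f * h) = π (f * h + 2 * f) - π (2 * f) := by
        rw [← map_sub]; congr 1; ring
      rw [e2, h2fQ]; ring
    · rw [SetLike.mem_coe, Ideal.mem_span_singleton']
      exact ⟨π g, hB.symm⟩
  · rw [Ideal.span_le]
    rintro x hx
    simp only [Set.mem_singleton_iff] at hx
    subst hx
    rw [SetLike.mem_coe, Ideal.mem_span_pair]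
    refine ⟨1 + 2 * π b, π a, ?_⟩
    have key2 : (1 + 2 * b) * (f * h) + a * (2 * f * g) = f * h + 2 * f := by
      linear_combination 2 * f * habc + f * c * h4
    calc (1 + 2 * π b) * π (f * h) + π a * π (2 * f * g)
        = π ((1 + 2 * b) * (f * h) + a * (2 * f * g)) := by
          simp only [map_add, map_mul, map_one, map_ofNat]
      _ = π (f * h + 2 * f) := by rw [key2]
end

section
/- For an odd positive integer n, if xⁿ - 1 factors into r distinct monic irreducible factors over ℤ/2, then the number of ideals (cyclic codes) of (ℤ/4)[x]/(xⁿ-1) is 3^r. -/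
/-!
Reduction mod 2 from `(ℤ/4)[X]` to `(ℤ/2)[X]` is surjective with kernel `(2)`, whose square is
zero. Over such a square-zero thickening units and coprimality lift, and so does a coprime
factorization (Hensel), so `Xⁿ - 1` lifts to a product of pairwise coprime factors `G`, one for
each irreducible factor `p` of `Xⁿ - 1` mod 2, and by the Chinese remainder theorem the ideals of
`(ℤ/4)[X]/(Xⁿ - 1)` are tuples of ideals of the `(ℤ/4)[X]/(G)`. Each of these is local with
maximal ideal `(2)`, which is nonzero and squares to zero, so its ideals are exactly `0, (2), (1)`.
-/

open Polynomial

section SquareZero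

variable {R S : Type*} [CommRing R] [CommRing S] {f : R →+* S}

theorem mul_eq_zero_of_mem_ker (hsq : RingHom.ker f ^ 2 = ⊥) {a b : R}
    (ha : a ∈ RingHom.ker f) (hb : b ∈ RingHom.ker f) : a * b = 0 := by
  simpa [← pow_two, hsq] using Ideal.mul_mem_mul ha hb

theorem isUnit_of_isUnit_map (hf : Function.Surjective f) (hsq : RingHom.ker f ^ 2 = ⊥)
    {u : R} (hu : IsUnit (f u)) : IsUnit u := by
  obtain ⟨w, hw⟩ := hf ↑hu.unit⁻¹
  have hk : u * w - 1 ∈ RingHom.ker f := by simp [RingHom.mem_ker, hw]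
  have hnil : IsNilpotent (u * w - 1) :=
    ⟨2, by rw [pow_two]; exact mul_eq_zero_of_mem_ker hsq hk hk⟩
  exact isUnit_of_mul_isUnit_left (by simpa using hnil.isUnit_add_one)

theorem isCoprime_of_isCoprime_map (hf : Function.Surjective f) (hsq : RingHom.ker f ^ 2 = ⊥)
    {x y : R} (h : IsCoprime (f x) (f y)) : IsCoprime x y := by
  obtain ⟨a, b, hab⟩ := h
  obtain ⟨a, rfl⟩ := hf a
  obtain ⟨b, rfl⟩ := hf b
  obtain ⟨v, hv⟩ :=
    (isUnit_of_isUnit_map hf hsq (u := a * x + b * y) (by simp [hab])).exists_left_inv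
  exact ⟨v * a, v * b, by linear_combination hv⟩

/-- With `u p + v q = 1` and `F = g h + e`, the lift `(g + v e) (h + u e)` differs from `F` by
elements of `(ker f)²`. -/
theorem exists_lift_of_map_eq_mul (hf : Function.Surjective f) (hsq : RingHom.ker f ^ 2 = ⊥)
    {F : R} {p q : S} (hpq : IsCoprime p q) (hF : f F = p * q) :
    ∃ G H, F = G * H ∧ f G = p ∧ f H = q := by
  obtain ⟨u, v, huv⟩ := hpq
  obtain ⟨g, rfl⟩ := hf p
  obtain ⟨h, rfl⟩ := hf q
  obtain ⟨u, rfl⟩ := hf u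
  obtain ⟨v, rfl⟩ := hf v
  have he : F - g * h ∈ RingHom.ker f := by simp [RingHom.mem_ker, hF]
  have hk : u * g + v * h - 1 ∈ RingHom.ker f := by simp [RingHom.mem_ker, huv]
  refine ⟨g + v * (F - g * h), h + u * (F - g * h), ?_, by simp [hF], by simp [hF]⟩
  linear_combination -mul_eq_zero_of_mem_ker hsq he hk - u * v * mul_eq_zero_of_mem_ker hsq he he

end SquareZero

theorem card_ideal_eq_three {A : Type*} [CommRing A] {t : A} (ht : t ≠ 0) (htt : t * t = 0)
    (hmax : (Ideal.span {t}).IsMaximal) : Nat.card (Ideal A) = 3 := by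
  set J := Ideal.span {t}
  have isUnit_of_notMem : ∀ x ∉ J, IsUnit x := by
    intro x hx
    obtain ⟨y, i, hi, hyx⟩ := hmax.exists_inv hx
    obtain ⟨z, rfl⟩ := Ideal.mem_span_singleton'.1 hi
    have hnil : IsNilpotent (-(z * t)) := ⟨2, by linear_combination z ^ 2 * htt⟩
    exact isUnit_of_mul_isUnit_right (by simpa [← hyx] using hnil.isUnit_one_add)
  have classify : ∀ I : Ideal A, I = ⊥ ∨ I = J ∨ I = ⊤ := by
    intro I
    by_cases hIJ : I ≤ J
    · refine or_iff_not_imp_left.2 fun hbot => Or.inl (le_antisymm hIJ ?_)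
      obtain ⟨x, hxI, hx0⟩ := Submodule.exists_mem_ne_zero_of_ne_bot hbot
      obtain ⟨y, rfl⟩ := Ideal.mem_span_singleton'.1 (hIJ hxI)
      have hy : y ∉ J := fun hy => by
        obtain ⟨z, rfl⟩ := Ideal.mem_span_singleton'.1 hy
        exact hx0 (by rw [mul_assoc, htt, mul_zero])
      obtain ⟨w, hw⟩ := (isUnit_of_notMem y hy).exists_left_inv
      rw [Ideal.span_singleton_le_iff_mem, ← one_mul t, ← hw, mul_assoc]
      exact I.mul_mem_left w hxI
    · obtain ⟨x, hxI, hxJ⟩ := SetLike.not_le_iff_exists.1 hIJ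
      exact Or.inr (Or.inr (I.eq_top_of_isUnit_mem hxI (isUnit_of_notMem x hxJ)))
  have hJbot : J ≠ ⊥ := by simpa [J] using ht
  have huniv : (Set.univ : Set (Ideal A)) = {⊥, J, ⊤} := by
    ext I
    simpa using classify I
  rw [← Set.ncard_univ, huniv, Set.ncard_insert_of_notMem
    (by simp [hJbot.symm, ((bot_lt_iff_ne_bot.2 hJbot).trans_le le_top).ne]),
    Set.ncard_pair hmax.ne_top]

theorem card_ideal_quotient_of_isUnit {R : Type*} [CommRing R] {u : R} (hu : IsUnit u) :
    Nat.card (Ideal (R ⧸ Ideal.span {u})) = 1 := by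
  have : Subsingleton (R ⧸ Ideal.span {u}) :=
    Ideal.Quotient.subsingleton_iff.2 (Ideal.span_singleton_eq_top.2 hu)
  exact Nat.card_unique

theorem card_ideal_quotient_mul_of_isCoprime {R : Type*} [CommRing R] {G H : R}
    (h : IsCoprime G H) :
    Nat.card (Ideal (R ⧸ Ideal.span {G * H})) =
      Nat.card (Ideal (R ⧸ Ideal.span {G})) * Nat.card (Ideal (R ⧸ Ideal.span {H})) := by
  let e := (Ideal.quotEquivOfEq (Ideal.span_singleton_mul_span_singleton G H).symm).trans
    (Ideal.quotientMulEquivQuotientProd _ _ ((Ideal.isCoprime_span_singleton_iff G H).2 h))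
  rw [← Nat.card_prod, ← Nat.card_congr Ideal.idealProdEquiv.toEquiv,
    Nat.card_congr (Ideal.relIsoOfBijective e e.bijective).toEquiv]

section PrincipalKernel

-- The model case is `ℤ/p² → ℤ/p` with `t = p`, or its polynomial version.

variable {R S : Type*} [CommRing R] [CommRing S] {f : R →+* S} {t : R}

theorem mul_self_eq_zero_of_ker_eq_span (hker : RingHom.ker f = Ideal.span {t})
    (hann : ∀ x, t * x = 0 ↔ f x = 0) : t * t = 0 :=
  (hann t).2 (by simp [← RingHom.mem_ker, hker])

theorem ker_sq_eq_bot_of_ker_eq_span (hker : RingHom.ker f = Ideal.span {t})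
    (hann : ∀ x, t * x = 0 ↔ f x = 0) : RingHom.ker f ^ 2 = ⊥ := by
  rw [hker, Ideal.span_singleton_pow, pow_two, mul_self_eq_zero_of_ker_eq_span hker hann,
    Ideal.span_singleton_eq_bot]

theorem isMaximal_span_mk_of_irreducible [IsPrincipalIdealRing S] (hf : Function.Surjective f)
    (hker : RingHom.ker f = Ideal.span {t}) {G : R} (hG : Irreducible (f G)) :
    (Ideal.span {Ideal.Quotient.mk (Ideal.span {G}) t}).IsMaximal := by
  have := PrincipalIdealRing.isMaximal_of_irreducible hG
  have hM : (Ideal.span {f G}).comap f = Ideal.span {G} ⊔ Ideal.span {t} := by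
    rw [← hker, ← Set.image_singleton, ← Ideal.map_span, Ideal.comap_map_of_surjective f hf,
      RingHom.ker_eq_comap_bot]
  have := Ideal.comap_isMaximal_of_surjective f hf (K := Ideal.span {f G})
  have hle : RingHom.ker (Ideal.Quotient.mk (Ideal.span {G})) ≤ (Ideal.span {f G}).comap f := by
    rw [Ideal.mk_ker, hM]
    exact le_sup_left
  have hmax := Ideal.IsMaximal.map_of_surjective_of_ker_le Ideal.Quotient.mk_surjective hle
  rwa [hM, Ideal.map_sup, Ideal.map_quotient_self, bot_sup_eq, Ideal.map_span,
    Set.image_singleton] at hmax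

theorem mk_ne_zero_of_irreducible [IsDomain S] (hker : RingHom.ker f = Ideal.span {t})
    (hann : ∀ x, t * x = 0 ↔ f x = 0) {G : R} (hG : Irreducible (f G)) :
    Ideal.Quotient.mk (Ideal.span {G}) t ≠ 0 := by
  intro h
  obtain ⟨d, hd⟩ := Ideal.mem_span_singleton.1 (Ideal.Quotient.eq_zero_iff_mem.1 h)
  have hfd : f d = 0 := by
    have : f G * f d = 0 := by
      rw [← map_mul, ← hd, ← hann, mul_self_eq_zero_of_ker_eq_span hker hann]
    exact (mul_eq_zero.1 this).resolve_left hG.ne_zero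
  obtain ⟨d', rfl⟩ := Ideal.mem_span_singleton.1 (hker ▸ RingHom.mem_ker.2 hfd : d ∈ _)
  have h1 : f (1 - G * d') = 0 := (hann _).1 (by linear_combination hd)
  rw [map_sub, map_one, map_mul, sub_eq_zero] at h1
  exact hG.not_isUnit (IsUnit.of_mul_eq_one (f d') h1.symm)

variable [IsDomain S] [IsPrincipalIdealRing S]

theorem card_ideal_quotient_of_irreducible (hf : Function.Surjective f)
    (hker : RingHom.ker f = Ideal.span {t}) (hann : ∀ x, t * x = 0 ↔ f x = 0) {G : R}
    (hG : Irreducible (f G)) : Nat.card (Ideal (R ⧸ Ideal.span {G})) = 3 :=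
  card_ideal_eq_three (mk_ne_zero_of_irreducible hker hann hG)
    (by rw [← map_mul, mul_self_eq_zero_of_ker_eq_span hker hann, map_zero])
    (isMaximal_span_mk_of_irreducible hf hker hG)

theorem card_ideal_quotient_eq_three_pow (hf : Function.Surjective f)
    (hker : RingHom.ker f = Ideal.span {t}) (hann : ∀ x, t * x = 0 ↔ f x = 0) {T : Finset S}
    (hirr : ∀ p ∈ T, Irreducible p) (hcop : (T : Set S).Pairwise IsCoprime) {F : R}
    (hF : f F = ∏ p ∈ T, p) : Nat.card (Ideal (R ⧸ Ideal.span {F})) = 3 ^ T.card := by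
  classical
  have hsq := ker_sq_eq_bot_of_ker_eq_span hker hann
  induction T using Finset.induction_on generalizing F with
  | empty =>
    rw [Finset.prod_empty] at hF
    exact card_ideal_quotient_of_isUnit (isUnit_of_isUnit_map hf hsq (by simp [hF]))
  | @insert p T hp ih =>
    rw [Finset.prod_insert hp] at hF
    rw [Finset.coe_insert, Set.pairwise_insert_of_symm] at hcop
    have hpT : IsCoprime p (∏ q ∈ T, q) :=
      IsCoprime.prod_right fun q hq => hcop.2 q hq (ne_of_mem_of_not_mem hq hp).symm
    obtain ⟨G, H, rfl, hG, hH⟩ := exists_lift_of_map_eq_mul hf hsq hpT hF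
    rw [card_ideal_quotient_mul_of_isCoprime (isCoprime_of_isCoprime_map hf hsq (hG ▸ hH ▸ hpT)),
      card_ideal_quotient_of_irreducible hf hker hann (hG ▸ hirr p (Finset.mem_insert_self p T)),
      ih (fun q hq => hirr q (Finset.mem_insert_of_mem hq)) hcop.1 hH,
      Finset.card_insert_of_notMem hp, pow_succ']

end PrincipalKernel

namespace Polynomial

variable {R S : Type*} [CommRing R] [CommRing S] {f : R →+* S} {t : R}

theorem ker_mapRingHom_eq_span (hker : RingHom.ker f = Ideal.span {t}) :
    RingHom.ker (mapRingHom f) = Ideal.span {C t} := by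
  rw [ker_mapRingHom, hker, Ideal.map_span, Set.image_singleton]

theorem C_mul_eq_zero_iff (hann : ∀ x, t * x = 0 ↔ f x = 0) (p : R[X]) :
    C t * p = 0 ↔ mapRingHom f p = 0 := by
  simp [Polynomial.ext_iff, coeff_C_mul, hann]

theorem pairwise_isCoprime_of_monic_irreducible {K : Type*} [Field K] {T : Finset K[X]}
    (hT : ∀ p ∈ T, p.Monic ∧ Irreducible p) : (T : Set K[X]).Pairwise IsCoprime := by
  intro p hp q hq hpq
  refine (hT p hp).2.coprime_iff_not_dvd.2 fun hdvd => hpq ?_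
  exact eq_of_monic_of_associated (hT p hp).1 (hT q hq).1
    ((hT p hp).2.associated_of_dvd (hT q hq).2 hdvd)

end Polynomial

theorem number_of_cyclic_codes_general (n : ℕ)
    (S : Finset (Polynomial (ZMod 2)))
    (hirr : ∀ p ∈ S, p.Monic ∧ Irreducible p)
    (hprod : ∏ p ∈ S, p = (X ^ n - 1 : Polynomial (ZMod 2))) :
    Nat.card
      (Ideal (Polynomial (ZMod 4) ⧸ Ideal.span {(X ^ n - 1 : Polynomial (ZMod 4))})) =
      3 ^ S.card := by
  let f : ZMod 4 →+* ZMod 2 := ZMod.castHom (by norm_num) (ZMod 2)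
  have hker : RingHom.ker f = Ideal.span {2} := by
    ext x
    simp only [RingHom.mem_ker, Ideal.mem_span_singleton']
    revert x
    decide
  have hann : ∀ x, 2 * x = 0 ↔ f x = 0 := by decide
  exact card_ideal_quotient_eq_three_pow (map_surjective f (ZMod.castHom_surjective _))
    (ker_mapRingHom_eq_span hker) (C_mul_eq_zero_iff hann) (fun p hp => (hirr p hp).2)
    (pairwise_isCoprime_of_monic_irreducible hirr) (by simp [hprod])

theorem number_of_cyclic_codes (n : ℕ) (hn : Odd n) (hpos : 0 < n)
    (S : Finset (Polynomial (ZMod 2)))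
    (hirr : ∀ p ∈ S, p.Monic ∧ Irreducible p)
    (hprod : ∏ p ∈ S, p = (X ^ n - 1 : Polynomial (ZMod 2))) :
    Nat.card
      (Ideal (Polynomial (ZMod 4) ⧸ Ideal.span {(X ^ n - 1 : Polynomial (ZMod 4))})) =
      3 ^ S.card :=
  number_of_cyclic_codes_general n S hirr hprod
end

section
/- For an odd positive integer n, the number of monic divisors of xⁿ - 1 in (ℤ/4)[x] equals 2^r, where r is the number of monic irreducible factors of xⁿ-1 in (ℤ/2)[x]; equivalently, monic divisors of xⁿ-1 over ℤ/4 are in bijection with monic divisors of xⁿ-1 over ℤ/2. -/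
/-!
Reduction modulo 2 maps monic divisors of `xⁿ - 1` over `ℤ/4` to monic divisors over `ℤ/2`, and
this is a bijection because the kernel `2·(ℤ/4)` squares to zero and `xⁿ - 1` is squarefree
modulo 2: a factorization `g * h` into coprime factors lifts through a square-zero kernel, and
uniquely so once the lift of `g` is required to be monic (Hensel's lemma in its first step).
Over the field `ℤ/2` the monic divisors of a product of distinct monic irreducibles are the
subproducts, so there are `2 ^ r` of them.
-/

open Polynomial

section SquareZeroKernel

variable {R S : Type*} [CommRing R] [CommRing S] {f : R →+* S}

theorem mul_eq_zero_of_map_eq_zero (hf : ∀ a b, f a = 0 → f b = 0 → a * b = 0)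
    {p q : R[X]} (hp : p.map f = 0) (hq : q.map f = 0) : p * q = 0 := by
  ext n
  rw [coeff_mul, coeff_zero]
  refine Finset.sum_eq_zero fun x _ => hf _ _ ?_ ?_
  · rw [← coeff_map, hp, coeff_zero]
  · rw [← coeff_map, hq, coeff_zero]

theorem exists_bezout_on_ker_map (hf : ∀ a b, f a = 0 → f b = 0 → a * b = 0)
    (hsurj : Function.Surjective f) {g c : R[X]} (hcop : IsCoprime (g.map f) (c.map f)) :
    ∃ u v : R[X], ∀ e : R[X], e.map f = 0 → (u * g + v * c) * e = e := by
  obtain ⟨u', v', huv⟩ := hcop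
  obtain ⟨u, rfl⟩ := map_surjective f hsurj u'
  obtain ⟨v, rfl⟩ := map_surjective f hsurj v'
  refine ⟨u, v, fun e he => ?_⟩
  have hker : (u * g + v * c - 1).map f = 0 := by
    simp only [Polynomial.map_sub, Polynomial.map_add, Polynomial.map_mul, Polynomial.map_one,
      huv, sub_self]
  linear_combination mul_eq_zero_of_map_eq_zero hf hker he

theorem eq_of_map_eq_of_mul_eq_mul [Nontrivial S] (hf : ∀ a b, f a = 0 → f b = 0 → a * b = 0)
    (hsurj : Function.Surjective f) {g₁ g₂ c₁ c₂ : R[X]} (hg₁ : g₁.Monic) (hg₂ : g₂.Monic)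
    (hmul : g₁ * c₁ = g₂ * c₂) (hcop : IsCoprime (g₁.map f) (c₁.map f))
    (hg : g₁.map f = g₂.map f) : g₁ = g₂ := by
  have : Nontrivial R := f.domain_nontrivial
  have hc : c₁.map f = c₂.map f := (hg₁.map f).isRegular.left <| by
    dsimp only
    rw [← Polynomial.map_mul, hmul, Polynomial.map_mul, ← hg]
  have hd : (g₂ - g₁).map f = 0 := by rw [Polynomial.map_sub, hg, sub_self]
  have he : (c₂ - c₁).map f = 0 := by rw [Polynomial.map_sub, hc, sub_self]
  have hrel : g₁ * (c₂ - c₁) + (g₂ - g₁) * c₁ = 0 := by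
    linear_combination -hmul - mul_eq_zero_of_map_eq_zero hf hd he
  obtain ⟨u, v, huv⟩ := exists_bezout_on_ker_map hf hsurj hcop
  have hdvd : g₁ ∣ g₂ - g₁ :=
    ⟨u * (g₂ - g₁) - v * (c₂ - c₁), by linear_combination -huv _ hd + v * hrel⟩
  have hlt : (g₂ - g₁).degree < g₁.degree := by
    refine degree_sub_lt_right ?_ hg₁.ne_zero (by rw [hg₁.leadingCoeff, hg₂.leadingCoeff])
    rw [← hg₁.degree_map f, ← hg₂.degree_map f, hg]
  have hzero : g₂ - g₁ = 0 := by
    rw [← (modByMonic_eq_self_iff hg₁).2 hlt, (modByMonic_eq_zero_iff_dvd hg₁).2 hdvd]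
  exact (sub_eq_zero.1 hzero).symm

theorem exists_monic_lift_of_mul_eq_map [Nontrivial S]
    (hf : ∀ a b, f a = 0 → f b = 0 → a * b = 0) (hsurj : Function.Surjective f)
    {F : R[X]} {g h : S[X]} (hg : g.Monic) (hgh : g * h = F.map f) (hcop : IsCoprime g h) :
    ∃ G H : R[X], G.Monic ∧ G * H = F ∧ G.map f = g := by
  have : Nontrivial R := f.domain_nontrivial
  obtain ⟨g₀, rfl, -, hg₀⟩ := lifts_and_degree_eq_and_monic (mem_lifts_of_surjective hsurj g) hg
  obtain ⟨h₀, rfl⟩ := map_surjective f hsurj h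
  obtain ⟨u, v, huv⟩ := exists_bezout_on_ker_map hf hsurj hcop
  set e := F - g₀ * h₀
  have he : e.map f = 0 := by
    rw [Polynomial.map_sub, Polynomial.map_mul, hgh, sub_self]
  have hve : (v * e).map f = 0 := by rw [Polynomial.map_mul, he, mul_zero]
  -- Reducing the correction `v * e` of `g₀` modulo `g₀` keeps `g₀ + δ` monic.
  set δ := v * e %ₘ g₀
  set q := v * e /ₘ g₀
  have hδ : δ.map f = 0 := by rw [map_modByMonic f hg₀, hve, zero_modByMonic]
  have hq : q.map f = 0 := by rw [map_divByMonic f hg₀, hve, zero_divByMonic]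
  have hε : (u * e + q * h₀).map f = 0 := by
    simp only [Polynomial.map_add, Polynomial.map_mul, he, hq, mul_zero, zero_mul, add_zero]
  refine ⟨g₀ + δ, h₀ + (u * e + q * h₀), hg₀.add_of_left (degree_modByMonic_lt _ hg₀), ?_, ?_⟩
  · linear_combination huv e he + h₀ * modByMonic_add_div (v * e) g₀ +
      mul_eq_zero_of_map_eq_zero hf hδ hε
  · rw [Polynomial.map_add, hδ, add_zero]

theorem card_monic_dvd_eq_of_squarefree_map {K : Type*} [Field K] (f : R →+* K)
    (hf : ∀ a b, f a = 0 → f b = 0 → a * b = 0) (hsurj : Function.Surjective f) {F : R[X]}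
    (hF : Squarefree (F.map f)) :
    Nat.card {g : R[X] // g.Monic ∧ g ∣ F} = Nat.card {g : K[X] // g.Monic ∧ g ∣ F.map f} := by
  have hcop {g h : K[X]} (hgh : g * h = F.map f) : IsCoprime g h :=
    (IsRelPrime.of_squarefree_mul (hgh ▸ hF)).isCoprime
  refine Nat.card_eq_of_bijective (fun g => ⟨g.1.map f, g.2.1.map f, map_dvd f g.2.2⟩) ⟨?_, ?_⟩
  · rintro ⟨g₁, hg₁, c₁, rfl⟩ ⟨g₂, hg₂, c₂, hc₂⟩ hg
    exact Subtype.ext <| eq_of_map_eq_of_mul_eq_mul hf hsurj hg₁ hg₂ hc₂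
      (hcop (Polynomial.map_mul f).symm) (congrArg Subtype.val hg)
  · rintro ⟨g, hg, h, hgh⟩
    obtain ⟨G, H, hG, rfl, hGg⟩ := exists_monic_lift_of_mul_eq_map hf hsurj hg hgh.symm
      (hcop hgh.symm)
    exact ⟨⟨G, hG, dvd_mul_right G H⟩, Subtype.ext hGg⟩

end SquareZeroKernel

section MonicIrreducible

variable {K : Type*} [Field K] {P : Finset K[X]}

theorem eq_of_monic_irreducible_of_dvd {p q : K[X]} (hp : p.Monic ∧ Irreducible p)
    (hq : q.Monic ∧ Irreducible q) (hpq : p ∣ q) : p = q :=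
  eq_of_monic_of_associated hp.1 hq.1 (hp.2.associated_of_dvd hq.2 hpq)

theorem isRelPrime_of_monic_irreducible_of_ne {p q : K[X]} (hp : p.Monic ∧ Irreducible p)
    (hq : q.Monic ∧ Irreducible q) (hne : p ≠ q) : IsRelPrime p q :=
  hp.2.isRelPrime_iff_not_dvd.2 fun hpq => hne (eq_of_monic_irreducible_of_dvd hp hq hpq)

theorem squarefree_prod_of_monic_irreducible (hP : ∀ p ∈ P, p.Monic ∧ Irreducible p) :
    Squarefree (∏ p ∈ P, p) :=
  Finset.squarefree_prod_of_pairwise_isCoprime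
    (fun p hp q hq hne => isRelPrime_of_monic_irreducible_of_ne (hP p hp) (hP q hq) hne)
    fun p hp => (hP p hp).2.squarefree

theorem subset_of_prod_dvd_prod (hP : ∀ p ∈ P, p.Monic ∧ Irreducible p) {T₁ T₂ : Finset K[X]}
    (hT₁ : T₁ ⊆ P) (hT₂ : T₂ ⊆ P) (hdvd : ∏ p ∈ T₁, p ∣ ∏ p ∈ T₂, p) : T₁ ⊆ T₂ := by
  intro p hp
  obtain ⟨q, hq, hpq⟩ :=
    (hP p (hT₁ hp)).2.prime.exists_mem_finset_dvd ((Finset.dvd_prod_of_mem _ hp).trans hdvd)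
  rwa [eq_of_monic_irreducible_of_dvd (hP p (hT₁ hp)) (hP q (hT₂ hq)) hpq]

theorem exists_subset_prod_eq_of_dvd_prod (hP : ∀ p ∈ P, p.Monic ∧ Irreducible p) {g : K[X]}
    (hg : g.Monic) (hgP : g ∣ ∏ p ∈ P, p) : ∃ T ⊆ P, ∏ p ∈ T, p = g := by
  classical
  refine ⟨P.filter (· ∣ g), Finset.filter_subset _ _, ?_⟩
  have hprod_dvd : ∏ p ∈ P.filter (· ∣ g), p ∣ g :=
    Finset.prod_dvd_of_coprime
      (fun p hp q hq hne => (isRelPrime_of_monic_irreducible_of_ne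
        (hP p (Finset.mem_filter.1 hp).1) (hP q (Finset.mem_filter.1 hq).1) hne).isCoprime)
      fun p hp => (Finset.mem_filter.1 hp).2
  have hcop : IsCoprime g (∏ p ∈ P.filter (¬ · ∣ g), p) :=
    IsCoprime.prod_right fun p hp => ((Irreducible.coprime_iff_not_dvd
      (hP p (Finset.mem_filter.1 hp).1).2).2 (Finset.mem_filter.1 hp).2).symm
  rw [← Finset.prod_filter_mul_prod_filter_not P (· ∣ g)] at hgP
  exact eq_of_monic_of_associated (monic_prod_of_monic _ _ fun p hp =>
    (hP p (Finset.mem_filter.1 hp).1).1) hg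
    (associated_of_dvd_dvd hprod_dvd (hcop.dvd_of_dvd_mul_right hgP))

theorem card_monic_dvd_prod_of_monic_irreducible (hP : ∀ p ∈ P, p.Monic ∧ Irreducible p) :
    Nat.card {g : K[X] // g.Monic ∧ g ∣ ∏ p ∈ P, p} = 2 ^ P.card := by
  classical
  rw [← Finset.card_powerset, ← Nat.card_eq_finsetCard]
  symm
  refine Nat.card_eq_of_bijective (fun T => ⟨∏ p ∈ T.1, p, monic_prod_of_monic _ _ fun p hp =>
    (hP p (Finset.mem_powerset.1 T.2 hp)).1, Finset.prod_dvd_prod_of_subset _ _ _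
      (Finset.mem_powerset.1 T.2)⟩) ⟨?_, ?_⟩
  · rintro ⟨T₁, hT₁⟩ ⟨T₂, hT₂⟩ h
    have h' : ∏ p ∈ T₁, p = ∏ p ∈ T₂, p := congrArg Subtype.val h
    rw [Finset.mem_powerset] at hT₁ hT₂
    exact Subtype.ext <| (subset_of_prod_dvd_prod hP hT₁ hT₂ h'.dvd).antisymm
      (subset_of_prod_dvd_prod hP hT₂ hT₁ h'.symm.dvd)
  · rintro ⟨g, hg, hgP⟩
    obtain ⟨T, hT, rfl⟩ := exists_subset_prod_eq_of_dvd_prod hP hg hgP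
    exact ⟨⟨T, Finset.mem_powerset.2 hT⟩, rfl⟩

end MonicIrreducible

theorem number_of_monic_divisors_general (n : ℕ)
    (S : Finset (Polynomial (ZMod 2)))
    (hirr : ∀ p ∈ S, p.Monic ∧ Irreducible p)
    (hprod : ∏ p ∈ S, p = (X ^ n - 1 : Polynomial (ZMod 2))) :
    Nat.card {f : Polynomial (ZMod 4) // f.Monic ∧ f ∣ X ^ n - 1} = 2 ^ S.card := by
  let π : ZMod 4 →+* ZMod 2 := ZMod.castHom (by norm_num) (ZMod 2)
  have hπ : ∀ a b, π a = 0 → π b = 0 → a * b = 0 := by decide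
  have hmap : (X ^ n - 1 : (ZMod 4)[X]).map π = ∏ p ∈ S, p := by simp [hprod]
  rw [card_monic_dvd_eq_of_squarefree_map π hπ (ZMod.ringHom_surjective π)
    (hmap ▸ squarefree_prod_of_monic_irreducible hirr), hmap,
    card_monic_dvd_prod_of_monic_irreducible hirr]

theorem number_of_monic_divisors (n : ℕ) (hn : Odd n) (hpos : 0 < n)
    (S : Finset (Polynomial (ZMod 2)))
    (hirr : ∀ p ∈ S, p.Monic ∧ Irreducible p)
    (hprod : ∏ p ∈ S, p = (X ^ n - 1 : Polynomial (ZMod 2))) :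
    Nat.card {f : Polynomial (ZMod 4) // f.Monic ∧ f ∣ X ^ n - 1} = 2 ^ S.card :=
  number_of_monic_divisors_general n S hirr hprod
end

section
/- Let C be the 1-generator quasi-cyclic code over ℤ/4 of length mℓ generated by (f₁(x)g(x), …, f_ℓ(x)g(x)) in ((ℤ/4)[x]/(xᵐ-1))^ℓ, where xᵐ-1 = g(x)h(x) with g monic and gcd conditions: each fᵢ is coprime to h modulo 2. Then every nonzero codeword of C has Lee weight at least ℓ·d, where d is the minimum Lee weight of the cyclic code generated by g(x) in (ℤ/4)[x]/(xᵐ-1). -/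
open Polynomial

/-- Reduction mod 2, ℤ/4 → ℤ/2. -/
def ρ : ZMod 4 →+* ZMod 2 := ZMod.castHom (show (2:ℕ) ∣ 4 by norm_num) (ZMod 2)

/-- Lee weight on ℤ/4: wL(0)=0, wL(1)=1, wL(2)=2, wL(3)=1. -/
def lee (x : ZMod 4) : ℕ :=
  match x.val with
  | 0 => 0
  | 1 => 1
  | 2 => 2
  | _ => 1

/-- Lee weight of the element of (ℤ/4)[x]/(xᵐ-1) represented by the polynomial p,
computed from its canonical representative of degree < m. -/
noncomputable def wt (m : ℕ) (p : Polynomial (ZMod 4)) : ℕ :=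
  ∑ i ∈ Finset.range m, lee ((p %ₘ (X ^ m - 1)).coeff i)

/-!
Since `ρ` has nilpotent kernel, a Bézout identity for `fᵢ, h` mod 2 lifts to one over ℤ/4. Hence
`xᵐ - 1 = g h` divides `a fᵢ g` iff `h` divides `a`, independently of `i`: a nonzero codeword has
all `ℓ` components nonzero, and each is a nonzero codeword of the cyclic code generated by `g`.
-/

theorem IsCoprime.of_map_s15 {R S : Type*} [CommRing R] [CommRing S] {φ : R →+* S}
    (hφ : Function.Surjective φ) (hker : ∀ x, φ x = 0 → IsNilpotent x) {p q : R}
    (h : IsCoprime (φ p) (φ q)) : IsCoprime p q := by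
  obtain ⟨u, v, huv⟩ := h
  obtain ⟨u', rfl⟩ := hφ u
  obtain ⟨v', rfl⟩ := hφ v
  have hnil : IsNilpotent (u' * p + v' * q - 1) :=
    hker _ (by rw [map_sub, map_add, map_mul, map_mul, huv, map_one, sub_self])
  have hunit : IsUnit (u' * p + v' * q) := by
    simpa using hnil.isUnit_one_add
  refine ⟨↑hunit.unit⁻¹ * u', ↑hunit.unit⁻¹ * v', ?_⟩
  rw [mul_assoc, mul_assoc, ← mul_add, hunit.val_inv_mul]

theorem Polynomial.isNilpotent_of_map_eq_zero {R S : Type*} [CommRing R] [Semiring S]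
    {φ : R →+* S} (hker : ∀ x, φ x = 0 → IsNilpotent x) {p : R[X]} (hp : p.map φ = 0) :
    IsNilpotent p :=
  Polynomial.isNilpotent_iff.2 fun i => hker _ (by rw [← coeff_map, hp, coeff_zero])

theorem isNilpotent_of_ρ_eq_zero (x : ZMod 4) (hx : ρ x = 0) : IsNilpotent x :=
  ⟨2, by revert x; decide⟩

theorem isCoprime_of_isCoprime_map_ρ {p q : (ZMod 4)[X]}
    (h : IsCoprime (p.map ρ) (q.map ρ)) : IsCoprime p q :=
  IsCoprime.of_map_s15 (φ := mapRingHom ρ) (map_surjective ρ (ZMod.ringHom_surjective ρ))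
    (fun _ => isNilpotent_of_map_eq_zero (φ := ρ) isNilpotent_of_ρ_eq_zero) h

theorem mul_dvd_mul_mul_iff_dvd {R : Type*} [CommRing R] {g h f a : R} (hg : IsLeftRegular g)
    (hf : IsCoprime f h) : g * h ∣ a * f * g ↔ h ∣ a := by
  rw [show a * f * g = g * (a * f) by ring, hg.dvd_cancel_left]
  exact ⟨hf.symm.dvd_of_dvd_mul_right, fun ha => dvd_mul_of_dvd_left ha f⟩

theorem asr_bound_general (m ℓ : ℕ)
    (g h : Polynomial (ZMod 4)) (hg : g.Monic)
    (hfac : g * h = X ^ m - 1)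
    (f : Fin ℓ → Polynomial (ZMod 4))
    (hcop : ∀ i, IsCoprime ((f i).map ρ) (h.map ρ))
    (d : ℕ)
    (hd : IsLeast {w | ∃ b : Polynomial (ZMod 4),
      ¬ (X ^ m - 1 : Polynomial (ZMod 4)) ∣ b * g ∧ w = wt m (b * g)} d)
    (a : Polynomial (ZMod 4))
    (hnz : ∃ i, ¬ (X ^ m - 1 : Polynomial (ZMod 4)) ∣ a * f i * g) :
    ℓ * d ≤ ∑ i : Fin ℓ, wt m (a * f i * g) := by
  have hcomp (i : Fin ℓ) : (X ^ m - 1 : (ZMod 4)[X]) ∣ a * f i * g ↔ h ∣ a := by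
    rw [← hfac]
    exact mul_dvd_mul_mul_iff_dvd hg.isRegular.left (isCoprime_of_isCoprime_map_ρ (hcop i))
  obtain ⟨i₀, hi₀⟩ := hnz
  have hd_le (i : Fin ℓ) : d ≤ wt m (a * f i * g) :=
    hd.2 ⟨a * f i, by rwa [hcomp, ← hcomp i₀], rfl⟩
  simpa [mul_comm] using Finset.card_nsmul_le_sum Finset.univ _ d fun i _ => hd_le i

theorem asr_bound (m ℓ : ℕ) (hm : Odd m) (hmpos : 0 < m) (hℓ : 1 ≤ ℓ)
    (g h : Polynomial (ZMod 4)) (hg : g.Monic) (hh : h.Monic)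
    (hfac : g * h = X ^ m - 1)
    (f : Fin ℓ → Polynomial (ZMod 4))
    (hcop : ∀ i, IsCoprime ((f i).map ρ) (h.map ρ))
    (d : ℕ)
    (hd : IsLeast {w | ∃ b : Polynomial (ZMod 4),
      ¬ (X ^ m - 1 : Polynomial (ZMod 4)) ∣ b * g ∧ w = wt m (b * g)} d)
    (a : Polynomial (ZMod 4))
    (hnz : ∃ i, ¬ (X ^ m - 1 : Polynomial (ZMod 4)) ∣ a * f i * g) :
    ℓ * d ≤ ∑ i : Fin ℓ, wt m (a * f i * g) :=
  asr_bound_general m ℓ g h hg hfac f hcop d hd a hnz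
end
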